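/- If 0 < β < 1/2 satisfies (π³/96 − 1/π)·β^{-1} + (7/8)ζ(3) − 1 < sin(πβ)/(πβ) − cos(πβ), then ∑_{j=3}^∞ |ĥ_β(j)| < ĥ_β(1), where ĥ_β(j) are the sine Fourier coefficients of h_β. -/

import Mathlib

open Real

noncomputable def hcore (β x : ℝ) : ℝ :=
  if x < β then (x / β + 1)^2 * (1 - x / (2 * β)) - 1 else 1

noncomputable def hprofile (β x : ℝ) : ℝ :=
  if x ≤ 1/2 then hcore β x else hcore β (1 - x)

noncomputable def hcoeff (β : ℝ) (j : ℕ) : ℝ :=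
  2 * ∫ x in (0:ℝ)..1, hprofile β x * Real.sin (j * π * x)

/-!
Reflection `x ↦ 1 - x` fixes the profile and multiplies `sin (jπx)` by `-(-1)^j`, so the even
coefficients vanish and the odd ones are four times the integral over `[0, 1/2]`. There the profile
is the cubic `3x/(2β) - x³/(2β³)` up to `β` and `1` afterwards, which integrates in closed form to
`ĥ_β(j) = 12/(j³π³β²) (sin(jπβ)/(jπβ) - cos(jπβ))`. With `|sin t / t - cos t| ≤ 1/t + 1` the tail
over odd `j ≥ 3` is dominated by a combination of `∑ 1/j⁴ = π⁴/96 - 1` and `∑ 1/j³ = 7ζ(3)/8 - 1`,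
which the hypothesis places below `ĥ_β(1)`.
-/

lemma hcore_of_le {β x : ℝ} (hβ : β ≠ 0) (hx : x ≤ β) :
    hcore β x = 3 / (2 * β) * x - x ^ 3 / (2 * β ^ 3) := by
  unfold hcore
  rcases hx.lt_or_eq with hx | rfl
  · rw [if_pos hx]
    field_simp
    ring
  · rw [if_neg (lt_irrefl x)]
    field_simp
    ring

lemma hcore_of_ge {β x : ℝ} (hx : β ≤ x) : hcore β x = 1 :=
  if_neg hx.not_gt

lemma continuous_hcore {β : ℝ} (hβ : β ≠ 0) : Continuous (hcore β) := by
  have : hcore β = fun x => if x ≤ β then 3 / (2 * β) * x - x ^ 3 / (2 * β ^ 3) else 1 := by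
    ext x
    split_ifs with hx
    · exact hcore_of_le hβ hx
    · exact hcore_of_ge (not_le.mp hx).le
  rw [this]
  refine Continuous.if_le (by fun_prop) continuous_const continuous_id continuous_const ?_
  rintro x rfl
  field_simp
  ring

lemma continuous_hprofile {β : ℝ} (hβ : β ≠ 0) : Continuous (hprofile β) :=
  Continuous.if_le (continuous_hcore hβ) ((continuous_hcore hβ).comp (by fun_prop))
    continuous_id continuous_const (by rintro x rfl; norm_num)

lemma hprofile_one_sub (β x : ℝ) : hprofile β (1 - x) = hprofile β x := by
  unfold hprofile
  rcases lt_trichotomy x (1 / 2) with hx | rfl | hx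
  · rw [if_neg (by linarith), if_pos hx.le, sub_sub_cancel]
  · norm_num
  · rw [if_pos (by linarith), if_neg hx.not_ge]

lemma integral_mul_sin_nat_mul_pi_of_symm {f : ℝ → ℝ} (hf : Continuous f)
    (hsymm : ∀ x, f (1 - x) = f x) (j : ℕ) :
    ∫ x in (0 : ℝ)..1, f x * sin (j * π * x)
      = (1 - (-1) ^ j) * ∫ x in (0 : ℝ)..1 / 2, f x * sin (j * π * x) := by
  set g := fun x => f x * sin (j * π * x)
  have hg : Continuous g := by fun_prop
  have hreflect : ∀ x, g (1 - x) = -(-1) ^ j * g x := by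
    intro x
    simp only [g, hsymm, mul_one_sub, sin_nat_mul_pi_sub]
    ring
  have hupper : ∫ x in (1 / 2 : ℝ)..1, g x = -(-1) ^ j * ∫ x in (0 : ℝ)..1 / 2, g x := by
    rw [← intervalIntegral.integral_const_mul]
    simp_rw [← hreflect]
    rw [intervalIntegral.integral_comp_sub_left]
    norm_num
  rw [← intervalIntegral.integral_add_adjacent_intervals (b := 1 / 2)
    (hg.intervalIntegrable _ _) (hg.intervalIntegrable _ _), hupper]
  ring

lemma hasDerivAt_sin_mul (c x : ℝ) :
    HasDerivAt (fun y => sin (c * y)) (c * cos (c * x)) x := by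
  simpa [mul_comm] using ((hasDerivAt_id x).const_mul c).sin

lemma hasDerivAt_cos_mul (c x : ℝ) :
    HasDerivAt (fun y => cos (c * y)) (-(c * sin (c * x))) x := by
  simpa [mul_comm] using ((hasDerivAt_id x).const_mul c).cos

lemma integral_linear_add_cubic_mul_sin (a b c t : ℝ) (hc : c ≠ 0) :
    ∫ x in (0 : ℝ)..t, (a * x + b * x ^ 3) * sin (c * x)
      = a * (sin (c * t) / c ^ 2 - t * cos (c * t) / c)
        + b * ((3 * t ^ 2 / c ^ 2 - 6 / c ^ 4) * sin (c * t)
          + (6 * t / c ^ 3 - t ^ 3 / c) * cos (c * t)) := by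
  set F := fun x => a * (sin (c * x) / c ^ 2 - x * cos (c * x) / c)
        + b * ((3 * x ^ 2 / c ^ 2 - 6 / c ^ 4) * sin (c * x)
          + (6 * x / c ^ 3 - x ^ 3 / c) * cos (c * x))
  have hF : ∀ x, HasDerivAt F ((a * x + b * x ^ 3) * sin (c * x)) x := by
    intro x
    have hs := hasDerivAt_sin_mul c x
    have hc' := hasDerivAt_cos_mul c x
    have := ((hs.div_const (c ^ 2)).sub ((hasDerivAt_id x).mul hc' |>.div_const c)).const_mul a
      |>.add (((((hasDerivAt_pow 2 x).const_mul 3).div_const (c ^ 2)).sub_const (6 / c ^ 4)).mul hs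
        |>.add ((((hasDerivAt_id x).const_mul 6).div_const (c ^ 3)).sub
          ((hasDerivAt_pow 3 x).div_const c) |>.mul hc') |>.const_mul b)
    refine this.congr_deriv ?_
    simp only [id, Pi.sub_apply]
    field_simp
    ring
  rw [intervalIntegral.integral_eq_sub_of_hasDerivAt (fun x _ => hF x)
    (Continuous.intervalIntegrable (by fun_prop) _ _)]
  simp [F]

lemma integral_sin_mul (c s t : ℝ) (hc : c ≠ 0) :
    ∫ x in s..t, sin (c * x) = (cos (c * s) - cos (c * t)) / c := by
  rw [intervalIntegral.integral_comp_mul_left sin hc, integral_sin, smul_eq_mul]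
  field_simp

lemma integral_hcore_mul_sin {β c : ℝ} (hβ : 0 < β) (hβ2 : β ≤ 1 / 2) (hc : c ≠ 0) :
    ∫ x in (0 : ℝ)..1 / 2, hcore β x * sin (c * x)
      = 3 / (c ^ 3 * β ^ 2) * (sin (c * β) / (c * β) - cos (c * β))
        - cos (c * (1 / 2)) / c := by
  have hint : Continuous fun x => hcore β x * sin (c * x) :=
    (continuous_hcore hβ.ne').mul (by fun_prop)
  have hcubic : ∫ x in (0 : ℝ)..β, hcore β x * sin (c * x)
      = ∫ x in (0 : ℝ)..β, (3 / (2 * β) * x + (-1 / (2 * β ^ 3)) * x ^ 3) * sin (c * x) := by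
    refine intervalIntegral.integral_congr fun x hx => ?_
    rw [Set.uIcc_of_le hβ.le] at hx
    simp only [hcore_of_le hβ.ne' hx.2]
    ring
  have hflat : ∫ x in β..1 / 2, hcore β x * sin (c * x) = ∫ x in β..1 / 2, sin (c * x) := by
    refine intervalIntegral.integral_congr fun x hx => ?_
    rw [Set.uIcc_of_le hβ2] at hx
    simp only [hcore_of_ge hx.1, one_mul]
  rw [← intervalIntegral.integral_add_adjacent_intervals (b := β) (hint.intervalIntegrable _ _)
    (hint.intervalIntegrable _ _), hcubic, hflat, integral_linear_add_cubic_mul_sin _ _ _ _ hc,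
    integral_sin_mul _ _ _ hc]
  field_simp
  ring

lemma hcoeff_eq_mul_integral_hcore {β : ℝ} (hβ : β ≠ 0) (j : ℕ) :
    hcoeff β j = 2 * (1 - (-1) ^ j) * ∫ x in (0 : ℝ)..1 / 2, hcore β x * sin (j * π * x) := by
  rw [hcoeff, integral_mul_sin_nat_mul_pi_of_symm (continuous_hprofile hβ) (hprofile_one_sub β),
    intervalIntegral.integral_congr fun x hx => ?_, mul_assoc]
  rw [Set.uIcc_of_le (by norm_num)] at hx
  simp only [hprofile, if_pos hx.2]

lemma hcoeff_of_even {β : ℝ} (hβ : β ≠ 0) {j : ℕ} (hj : Even j) : hcoeff β j = 0 := by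
  rw [hcoeff_eq_mul_integral_hcore hβ, hj.neg_one_pow]
  ring

lemma hcoeff_of_odd {β : ℝ} (hβ : 0 < β) (hβ2 : β ≤ 1 / 2) {j : ℕ} (hj : Odd j) :
    hcoeff β j
      = 12 / (j ^ 3 * π ^ 3 * β ^ 2) * (sin (j * π * β) / (j * π * β) - cos (j * π * β)) := by
  obtain ⟨m, rfl⟩ := hj
  have hc : ((2 * m + 1 : ℕ) : ℝ) * π ≠ 0 := by positivity
  have hcos : cos ((2 * m + 1 : ℕ) * π * (1 / 2)) = 0 :=
    cos_eq_zero_iff.mpr ⟨m, by push_cast; ring⟩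
  rw [hcoeff_eq_mul_integral_hcore hβ.ne', integral_hcore_mul_sin hβ hβ2 hc, hcos,
    (odd_two_mul_add_one m).neg_one_pow]
  field_simp
  ring

lemma abs_sin_div_sub_cos_le {t : ℝ} (ht : 0 < t) : |sin t / t - cos t| ≤ 1 / t + 1 := by
  refine (abs_sub _ _).trans (add_le_add ?_ (abs_cos_le_one t))
  rw [abs_div, abs_of_pos ht]
  exact div_le_div_of_nonneg_right (abs_sin_le_one t) ht.le

lemma abs_hcoeff_le {β : ℝ} (hβ : 0 < β) (hβ2 : β ≤ 1 / 2) {j : ℕ} (hj : Odd j) :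
    |hcoeff β j| ≤ 12 / (j ^ 3 * π ^ 3 * β ^ 2) * (1 / (j * π * β) + 1) := by
  have hj0 : (0 : ℝ) < j := by exact_mod_cast hj.pos
  rw [hcoeff_of_odd hβ hβ2 hj, abs_mul, abs_of_pos (by positivity)]
  gcongr
  exact abs_sin_div_sub_cos_le (by positivity)

lemma hasSum_one_div_nat_pow_re_riemannZeta {k : ℕ} (hk : 1 < k) :
    HasSum (fun n : ℕ => 1 / (n : ℝ) ^ k) (riemannZeta k).re := by
  convert (Real.summable_one_div_nat_pow.mpr hk).hasSum
  simp_rw [zeta_nat_eq_tsum_of_gt_one hk, one_div, ← Complex.ofReal_natCast,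
    ← Complex.ofReal_pow, ← Complex.ofReal_inv, ← Complex.ofReal_tsum, Complex.ofReal_re]

lemma hasSum_one_div_odd_pow {p : ℕ} {Z : ℝ} (hZ : HasSum (fun n : ℕ => 1 / (n : ℝ) ^ p) Z) :
    HasSum (fun k : ℕ => 1 / (2 * k + 1 : ℝ) ^ p) ((1 - 1 / 2 ^ p) * Z) := by
  have heven : HasSum (fun k : ℕ => 1 / ((2 * k : ℕ) : ℝ) ^ p) (1 / 2 ^ p * Z) :=
    (hZ.mul_left _).congr_fun fun k => by push_cast; rw [mul_pow, one_div_mul_one_div]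
  have hodd : Summable fun k : ℕ => 1 / ((2 * k + 1 : ℕ) : ℝ) ^ p :=
    hZ.summable.comp_injective fun a b h => by simpa using h
  have hZ' : Z = 1 / 2 ^ p * Z + ∑' k : ℕ, 1 / ((2 * k + 1 : ℕ) : ℝ) ^ p :=
    hZ.unique (heven.even_add_odd hodd.hasSum)
  rw [show (1 - 1 / 2 ^ p) * Z = ∑' k : ℕ, 1 / ((2 * k + 1 : ℕ) : ℝ) ^ p by linarith]
  exact hodd.hasSum.congr_fun fun k => by push_cast; rfl

lemma hasSum_one_div_odd_pow_from_three {p : ℕ} {Z : ℝ}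
    (hZ : HasSum (fun n : ℕ => 1 / (n : ℝ) ^ p) Z) :
    HasSum (fun k : ℕ => 1 / (2 * k + 3 : ℝ) ^ p) ((1 - 1 / 2 ^ p) * Z - 1) := by
  have := (hasSum_nat_add_iff' 1).mpr (hasSum_one_div_odd_pow hZ)
  simp only [Finset.sum_range_one, CharP.cast_eq_zero, mul_zero, zero_add, one_pow,
    div_one] at this
  exact this.congr_fun fun k => by push_cast; ring_nf

lemma hasSum_hcoeff_majorant {β : ℝ} (hβ : 0 < β) :
    HasSum
      (fun k : ℕ => 12 / ((2 * k + 3 : ℝ) ^ 3 * π ^ 3 * β ^ 2) * (1 / ((2 * k + 3) * π * β) + 1))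
      (12 / (π ^ 3 * β ^ 2) * ((π ^ 3 / 96 - 1 / π) * β⁻¹ + 7 / 8 * (riemannZeta 3).re - 1)) := by
  have h4 := hasSum_one_div_odd_pow_from_three hasSum_zeta_four
  have h3 := hasSum_one_div_odd_pow_from_three
    (hasSum_one_div_nat_pow_re_riemannZeta (k := 3) (by norm_num))
  have := ((h4.mul_left (1 / (π * β))).add h3).mul_left (12 / (π ^ 3 * β ^ 2))
  rw [Nat.cast_ofNat] at this
  rw [show (π ^ 3 / 96 - 1 / π) * β⁻¹ + 7 / 8 * (riemannZeta 3).re - 1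
      = 1 / (π * β) * ((1 - 1 / 2 ^ 4) * (π ^ 4 / 90) - 1)
        + ((1 - 1 / 2 ^ 3) * (riemannZeta 3).re - 1)
    by field_simp; ring]
  refine this.congr_fun fun k => ?_
  have hk : (2 * k + 3 : ℝ) ≠ 0 := by positivity
  field_simp

theorem stmt_9 (β : ℝ) (hβ0 : 0 < β) (hβ : β < 1/2)
    (h : (π^3 / 96 - 1 / π) * β⁻¹ + (7/8) * (riemannZeta 3).re - 1 <
      Real.sin (π * β) / (π * β) - Real.cos (π * β)) :
    ∑' j : ℕ, |hcoeff β (j + 3)| < hcoeff β 1 := by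
  have hmajorant := hasSum_hcoeff_majorant hβ0
  have hbound : ∀ k : ℕ, |hcoeff β (2 * k + 3)|
      ≤ 12 / ((2 * k + 3 : ℝ) ^ 3 * π ^ 3 * β ^ 2) * (1 / ((2 * k + 3) * π * β) + 1) :=
    fun k => (abs_hcoeff_le hβ0 hβ.le ⟨k + 1, by ring⟩).trans_eq (by push_cast; ring)
  have hodd : ∑' j : ℕ, |hcoeff β (j + 3)| = ∑' k : ℕ, |hcoeff β (2 * k + 3)| := by
    refine ((mul_right_injective₀ two_ne_zero).tsum_eq fun j hj => ?_).symm
    rcases Nat.even_or_odd j with ⟨k, rfl⟩ | hj'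
    · exact ⟨k, two_mul k⟩
    · exact (Function.mem_support.mp hj
        (by rw [hcoeff_of_even hβ0.ne' (hj'.add_odd (by decide)), abs_zero])).elim
  have hone : hcoeff β 1 = 12 / (π ^ 3 * β ^ 2) * (sin (π * β) / (π * β) - cos (π * β)) := by
    simpa using hcoeff_of_odd hβ0 hβ.le odd_one
  rw [hodd, hone]
  calc ∑' k : ℕ, |hcoeff β (2 * k + 3)|
      ≤ ∑' k : ℕ, 12 / ((2 * k + 3 : ℝ) ^ 3 * π ^ 3 * β ^ 2) * (1 / ((2 * k + 3) * π * β) + 1) :=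
        (hmajorant.summable.of_nonneg_of_le (fun _ => abs_nonneg _) hbound).tsum_le_tsum hbound
          hmajorant.summable
    _ = _ := hmajorant.tsum_eq
    _ < _ := mul_lt_mul_of_pos_left h (by positivity)
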